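/- arXiv:2301.02507 — 2 statements merged into one kernel-verified Lean document; each statement's English description precedes it below -/
import Mathlib

section
/- For any connected graph G and any edge e ∈ E(G), dem(G-e) - dem(G) ≤ 2. -/
open SimpleGraph

variable {V : Type*}

/-- Edge `e` is monitored by vertex `x` in `G`: some distance from `x` changes
when `e` is removed. -/
def monitors (G : SimpleGraph V) (x : V) (e : Sym2 V) : Prop :=
  ∃ y : V, G.edist x y ≠ (G.deleteEdges {e}).edist x y

/-- `M` is a distance-edge-monitoring set of `G`. -/
def IsDEMSet (G : SimpleGraph V) (M : Set V) : Prop :=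
  ∀ e ∈ G.edgeSet, ∃ x ∈ M, monitors G x e

/-- The distance-edge-monitoring number of `G`. -/
noncomputable def dem (G : SimpleGraph V) : ℕ :=
  sInf {n | ∃ M : Set V, M.ncard = n ∧ IsDEMSet G M}

/-!
If `M` is a distance-edge-monitoring set of `G` and `e = uv`, then `M ∪ {u, v}` is one of
`G - e`. Suppose `x ∈ M` monitors `f` in `G` through `y` but no longer does so in `G - e`.
Then `d_{G-f}(x, y) ≤ d_{G-e-f}(x, y) = d_{G-e}(x, y)`, so a shortest `x`–`y` path of `G`
runs through both `e` and `f`. The endpoint `v` of `e` on the side of `f` monitors `f` in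
`G - e` through `y`: otherwise a shortest `v`–`y` path of `G - e - f` could replace the
segment of the path after `e`, giving an `x`–`y` walk of `G - f` of length at most
`d_G(x, y) < d_{G-f}(x, y)`.
-/

namespace SimpleGraph

variable {G : SimpleGraph V}

theorem Walk.exists_eq_append_cons_of_mem_edges {x y : V} {e : Sym2 V} (p : G.Walk x y)
    (he : e ∈ p.edges) :
    ∃ (u v : V) (q : G.Walk x u) (h : G.Adj u v) (r : G.Walk v y),
      s(u, v) = e ∧ p = q.append (cons h r) := by
  induction p with
  | nil => simp at he
  | @cons a b c hab p ih =>
    rcases List.mem_cons.mp he with rfl | he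
    · exact ⟨a, b, nil, hab, p, rfl, rfl⟩
    · obtain ⟨u, v, q, h, r, rfl, rfl⟩ := ih he
      exact ⟨u, v, cons hab q, h, r, rfl, rfl⟩

theorem edist_deleteEdges_le_length {x y : V} {f : Sym2 V} (p : G.Walk x y)
    (hf : f ∉ p.edges) : (G.deleteEdges {f}).edist x y ≤ p.length := by
  simpa using edist_le (p.toDeleteEdge f hf)

theorem Walk.mem_edges_of_length_lt_edist_deleteEdges {x y : V} {f : Sym2 V} (p : G.Walk x y)
    (h : (p.length : ℕ∞) < (G.deleteEdges {f}).edist x y) : f ∈ p.edges := by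
  by_contra hf
  exact (edist_deleteEdges_le_length p hf).not_gt h

end SimpleGraph

open SimpleGraph.Walk

theorem monitors_deleteEdges_of_isPath_append_cons {G : SimpleGraph V} {x y u v : V}
    {f : Sym2 V} (q : G.Walk x u) (h : G.Adj u v) (r : G.Walk v y)
    (hp : (q.append (cons h r)).IsPath)
    (hlen : ((q.append (cons h r)).length : ℕ∞) < (G.deleteEdges {f}).edist x y)
    (hf : f ∈ r.edges) :
    monitors (G.deleteEdges {s(u, v)}) v f := by
  have hnodup : (q.edges ++ s(u, v) :: r.edges).Nodup := by
    simpa [edges_append] using hp.edges_nodup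
  have hfq : f ∉ q.edges := fun hfq => List.disjoint_of_nodup_append hnodup hfq (.tail _ hf)
  have her : s(u, v) ∉ r.edges := (List.nodup_cons.mp (List.nodup_append.mp hnodup).2.1).1
  have hfqh : f ∉ (q.concat h).edges := by
    rw [edges_concat, List.concat_eq_append, List.mem_append, List.mem_singleton]
    rintro (hfq' | rfl)
    exacts [hfq hfq', her hf]
  refine ⟨y, fun heq => hlen.not_ge ?_⟩
  calc (G.deleteEdges {f}).edist x y
      ≤ (G.deleteEdges {f}).edist x v + (G.deleteEdges {f}).edist v y :=
        SimpleGraph.edist_triangle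
    _ ≤ (q.concat h).length + ((G.deleteEdges {s(u, v)}).deleteEdges {f}).edist v y := by
        refine add_le_add (edist_deleteEdges_le_length _ hfqh) (edist_anti ?_)
        rw [deleteEdges_deleteEdges]
        exact deleteEdges_anti (by simp)
    _ ≤ (q.concat h).length + r.length := by
        rw [← heq]
        gcongr
        exact edist_deleteEdges_le_length r her
    _ = (q.append (cons h r)).length := by
        simp only [length_concat, length_append, length_cons]
        push_cast
        ring

theorem exists_mem_monitors_deleteEdges_of_isPath {G : SimpleGraph V} {x y : V}
    {e f : Sym2 V} (p : G.Walk x y) (hp : p.IsPath)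
    (hlen : (p.length : ℕ∞) < (G.deleteEdges {f}).edist x y) (he : e ∈ p.edges)
    (hfe : f ≠ e) :
    ∃ z ∈ e, monitors (G.deleteEdges {e}) z f := by
  have hf := p.mem_edges_of_length_lt_edist_deleteEdges hlen
  obtain ⟨u, v, q, h, r, rfl, rfl⟩ := p.exists_eq_append_cons_of_mem_edges he
  rw [edges_append, edges_cons, List.mem_append, List.mem_cons] at hf
  rcases hf with hfq | rfl | hfr
  · have hrev : (q.append (cons h r)).reverse = r.reverse.append (cons h.symm q.reverse) := by
      rw [reverse_append, reverse_cons, ← append_assoc, cons_append, nil_append]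
    refine ⟨u, Sym2.mem_mk_left u v, Sym2.eq_swap ▸ ?_⟩
    refine monitors_deleteEdges_of_isPath_append_cons r.reverse h.symm q.reverse
      (hrev ▸ hp.reverse) ?_ (by simpa using hfq)
    rwa [← hrev, length_reverse, SimpleGraph.edist_comm]
  · exact absurd rfl hfe
  · exact ⟨v, Sym2.mem_mk_right u v,
      monitors_deleteEdges_of_isPath_append_cons q h r hp hlen hfr⟩

theorem IsDEMSet.deleteEdges_union {G : SimpleGraph V} {M : Set V} (hM : IsDEMSet G M)
    (u v : V) : IsDEMSet (G.deleteEdges {s(u, v)}) (M ∪ {u, v}) := by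
  classical
  intro f hf
  rw [edgeSet_deleteEdges] at hf
  obtain ⟨x, hxM, y, hxy⟩ := hM f hf.1
  by_cases hx : monitors (G.deleteEdges {s(u, v)}) x f
  · exact ⟨x, .inl hxM, hx⟩
  have hlt : G.edist x y < (G.deleteEdges {f}).edist x y :=
    (edist_anti (deleteEdges_le _)).lt_of_ne hxy
  have hle : (G.deleteEdges {f}).edist x y ≤ (G.deleteEdges {s(u, v)}).edist x y := by
    rw [not_not.mp (not_exists.mp hx y), deleteEdges_deleteEdges]
    exact edist_anti (deleteEdges_anti (by simp))
  obtain ⟨p, hp⟩ := exists_walk_of_edist_ne_top hlt.ne_top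
  have hlen : (p.bypass.length : ℕ∞) ≤ G.edist x y :=
    hp ▸ Nat.cast_le.mpr p.length_bypass_le_length
  have he := p.bypass.mem_edges_of_length_lt_edist_deleteEdges (hlen.trans_lt (hlt.trans_le hle))
  obtain ⟨z, hz, hmon⟩ := exists_mem_monitors_deleteEdges_of_isPath p.bypass p.bypass_isPath
    (hlen.trans_lt hlt) he hf.2
  exact ⟨z, .inr (by simpa using hz), hmon⟩

theorem isDEMSet_univ (G : SimpleGraph V) : IsDEMSet G Set.univ := by
  intro f hf
  induction f using Sym2.ind with
  | _ a b =>
    refine ⟨a, Set.mem_univ a, b, ?_⟩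
    rw [edist_eq_one_iff_adj.mpr hf, ne_comm, Ne, edist_eq_one_iff_adj, deleteEdges_adj]
    simp

theorem exists_isDEMSet_ncard_eq_dem (G : SimpleGraph V) :
    ∃ M : Set V, IsDEMSet G M ∧ M.ncard = dem G := by
  obtain ⟨M, hM, hdem⟩ := Nat.sInf_mem (s := {n | ∃ M : Set V, M.ncard = n ∧ IsDEMSet G M})
    ⟨_, Set.univ, rfl, isDEMSet_univ G⟩
  exact ⟨M, hdem, hM⟩

theorem IsDEMSet.dem_le_ncard {G : SimpleGraph V} {M : Set V} (hM : IsDEMSet G M) :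
    dem G ≤ M.ncard :=
  Nat.sInf_le ⟨M, rfl, hM⟩

theorem dem_deleteEdges_le (G : SimpleGraph V) (e : Sym2 V) :
    dem (G.deleteEdges {e}) ≤ dem G + 2 := by
  induction e using Sym2.ind with
  | _ u v =>
    obtain ⟨M, hM, hcard⟩ := exists_isDEMSet_ncard_eq_dem G
    calc dem (G.deleteEdges {s(u, v)})
        ≤ (M ∪ {u, v}).ncard := (hM.deleteEdges_union u v).dem_le_ncard
      _ ≤ M.ncard + ({u, v} : Set V).ncard := Set.ncard_union_le _ _
      _ ≤ dem G + 2 := by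
          have := Set.ncard_insert_le u {v}
          rw [Set.ncard_singleton] at this
          omega

theorem stmt7_general (G : SimpleGraph V) (e : Sym2 V) :
    dem (G.deleteEdges {e}) - dem G ≤ 2 :=
  Nat.sub_le_iff_le_add'.mpr (dem_deleteEdges_le G e)

theorem stmt7 [Fintype V] (G : SimpleGraph V) (hG : G.Connected)
    (e : Sym2 V) (he : e ∈ G.edgeSet) :
    dem (G.deleteEdges {e}) - dem G ≤ 2 :=
  stmt7_general G e
end

section
/- For the complete graph K_n (n ≥ 3) and any edge e ∈ E(K_n), dem(K_n - e) = n - 2. -/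
open SimpleGraph

variable {V : Type*}

/-!
An endpoint of an edge always monitors it, so the complement of the two endpoints of `e` is a
monitoring set of `K_n - e`. Conversely, for `n ≥ 4` a vertex of `K_n - e` monitors no edge
`f ≠ e` it is not incident to: the only pair at distance 2 is `e` itself, and its `n - 2 ≥ 2`
common neighbours give paths of length 2, at most one of which passes through `f`. Hence a
monitoring set meets every edge of `K_n - e`, and three vertices outside it would span one.
-/

lemma monitors_of_adj (G : SimpleGraph V) {u v : V} (h : G.Adj u v) : monitors G u s(u, v) :=
  ⟨v, fun hc => by
    simpa using edist_eq_one_iff_adj.mp (hc.symm.trans (edist_eq_one_iff_adj.mpr h))⟩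

lemma isDEMSet_of_forall_exists_mem {G : SimpleGraph V} {M : Set V}
    (hM : ∀ f ∈ G.edgeSet, ∃ x ∈ M, x ∈ f) : IsDEMSet G M := by
  intro f hf
  obtain ⟨x, hxM, hxf⟩ := hM f hf
  rw [← Sym2.other_spec hxf] at hf ⊢
  exact ⟨x, hxM, monitors_of_adj G hf⟩

lemma Sym2.exists_forall_mk_eq_imp_eq (f : Sym2 V) (y : V) : ∃ z, ∀ w, s(w, y) = f → w = z := by
  by_cases hy : y ∈ f
  · exact ⟨Sym2.Mem.other hy, fun w hw =>
      Sym2.congr_right.mp (Sym2.eq_swap.trans (hw.trans (Sym2.other_spec hy).symm))⟩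
  · exact ⟨y, fun w hw => absurd (hw ▸ Sym2.mem_mk_right w y) hy⟩

lemma exists_ne_ne_ne [Finite V] (hV : 3 < Nat.card V) (a b c : V) :
    ∃ w, w ≠ a ∧ w ≠ b ∧ w ≠ c := by
  have hcard : ({a, b, c} : Set V).ncard < (Set.univ : Set V).ncard := by
    rw [Set.ncard_univ]
    have := Set.ncard_insert_le a {b, c}
    have := Set.ncard_insert_le b {c}
    have := Set.ncard_singleton c
    omega
  obtain ⟨w, -, hw⟩ := Set.exists_mem_notMem_of_ncard_lt_ncard hcard
  simp only [Set.mem_insert_iff, Set.mem_singleton_iff, not_or] at hw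
  exact ⟨w, hw⟩

lemma top_deleteEdges_adj {e : Sym2 V} {x y : V} :
    ((⊤ : SimpleGraph V).deleteEdges {e}).Adj x y ↔ x ≠ y ∧ s(x, y) ≠ e := by
  simp

lemma not_monitors_top_deleteEdges [Finite V] (hV : 3 < Nat.card V) {e f : Sym2 V}
    {x : V} (hx : x ∉ f) : ¬ monitors ((⊤ : SimpleGraph V).deleteEdges {e}) x f := by
  set G := (⊤ : SimpleGraph V).deleteEdges {e}
  set H := G.deleteEdges {f}
  have hxf : ∀ w, s(x, w) ≠ f := fun w h => hx (h ▸ Sym2.mem_mk_left x w)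
  rintro ⟨y, hy⟩
  apply hy
  rcases eq_or_ne x y with rfl | hxy
  · simp
  by_cases hG : G.Adj x y
  · have hH : H.Adj x y := (deleteEdges_adj ..).mpr ⟨hG, hxf y⟩
    rw [edist_eq_one_iff_adj.mpr hG, edist_eq_one_iff_adj.mpr hH]
  have hxye : s(x, y) = e := by simpa [G, hxy] using hG
  obtain ⟨z, hz⟩ := Sym2.exists_forall_mk_eq_imp_eq f y
  obtain ⟨w, hwx, hwy, hwz⟩ := exists_ne_ne_ne hV x y z
  have hw : H.Adj x w ∧ H.Adj y w := by
    simp only [H, G, deleteEdges_adj, top_adj, Set.mem_singleton_iff]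
    refine ⟨⟨⟨hwx.symm, fun h => hwy ?_⟩, hxf w⟩, ⟨⟨hwy.symm, fun h => hwx ?_⟩, fun h => hwz ?_⟩⟩
    · exact Sym2.congr_right.mp (h.trans hxye.symm)
    · exact Sym2.congr_left.mp (Sym2.eq_swap.trans (h.trans hxye.symm))
    · exact hz w (Sym2.eq_swap.trans h)
  have hH : ¬ H.Adj x y := fun h => hG h.1
  rw [edist_eq_two_iff.mpr ⟨hxy, hG, w, G.mem_commonNeighbors.mpr ⟨hw.1.1, hw.2.1⟩⟩,
    edist_eq_two_iff.mpr ⟨hxy, hH, w, H.mem_commonNeighbors.mpr hw⟩]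

lemma exists_mem_compl_pair_of_mem_edgeSet {a b : V} {f : Sym2 V}
    (hf : f ∈ ((⊤ : SimpleGraph V).deleteEdges {s(a, b)}).edgeSet) :
    ∃ x ∈ ({a, b} : Set V)ᶜ, x ∈ f := by
  induction f using Sym2.ind with
  | _ u v =>
  rw [mem_edgeSet, top_deleteEdges_adj] at hf
  by_contra! h
  have hu : u ∈ ({a, b} : Set V) := not_not.mp (mt (h u) (by simp))
  have hv : v ∈ ({a, b} : Set V) := not_not.mp (mt (h v) (by simp))
  rcases hu with rfl | rfl <;> rcases hv with rfl | rfl <;> simp_all [Sym2.eq_swap]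

lemma exists_mem_edgeSet_forall_notMem_of_two_lt_ncard_compl [Finite V] {e : Sym2 V}
    {M : Set V} (hM : 2 < Mᶜ.ncard) :
    ∃ f ∈ ((⊤ : SimpleGraph V).deleteEdges {e}).edgeSet, ∀ x ∈ f, x ∉ M := by
  obtain ⟨a, b, c, ha, hb, hc, hab, hac, hbc⟩ := (Set.two_lt_ncard_iff).mp hM
  by_cases habe : s(a, b) = e
  · have hace : s(a, c) ≠ e := fun h => hbc (Sym2.congr_right.mp (habe.trans h.symm))
    refine ⟨s(a, c), top_deleteEdges_adj.mpr ⟨hac, hace⟩, ?_⟩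
    simpa [Sym2.mem_iff] using ⟨ha, hc⟩
  · refine ⟨s(a, b), top_deleteEdges_adj.mpr ⟨hab, habe⟩, ?_⟩
    simpa [Sym2.mem_iff] using ⟨ha, hb⟩

lemma IsDEMSet.ncard_compl_le_two [Finite V] {e : Sym2 V} {M : Set V}
    (hM : IsDEMSet ((⊤ : SimpleGraph V).deleteEdges {e}) M) : Mᶜ.ncard ≤ 2 := by
  by_contra! hMc
  obtain ⟨f, hf, hfM⟩ := exists_mem_edgeSet_forall_notMem_of_two_lt_ncard_compl hMc
  obtain ⟨x, hxM, hx⟩ := hM f hf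
  have hV : 3 < Nat.card V := by
    have := Set.ncard_add_ncard_compl M
    have := (Set.ncard_pos).mpr ⟨x, hxM⟩
    omega
  exact not_monitors_top_deleteEdges hV (fun hxf => hfM x hxf hxM) hx

theorem dem_top_deleteEdges [Finite V] {e : Sym2 V} (he : ¬ e.IsDiag) :
    dem ((⊤ : SimpleGraph V).deleteEdges {e}) = Nat.card V - 2 := by
  induction e using Sym2.ind with
  | _ a b =>
  have hab : a ≠ b := by simpa using he
  have hcover : IsDEMSet ((⊤ : SimpleGraph V).deleteEdges {s(a, b)}) ({a, b} : Set V)ᶜ :=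
    isDEMSet_of_forall_exists_mem fun f hf => exists_mem_compl_pair_of_mem_edgeSet hf
  have hcard : (({a, b} : Set V)ᶜ).ncard = Nat.card V - 2 := by
    rw [Set.ncard_compl, Set.ncard_pair hab]
  refine le_antisymm (Nat.sInf_le ⟨_, hcard, hcover⟩) (le_csInf ⟨_, _, hcard, hcover⟩ ?_)
  rintro m ⟨M, rfl, hM⟩
  have := Set.ncard_add_ncard_compl M
  have := hM.ncard_compl_le_two
  omega

theorem stmt17_general (n : ℕ) (e : Sym2 (Fin n))
    (he : e ∈ (⊤ : SimpleGraph (Fin n)).edgeSet) :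
    dem ((⊤ : SimpleGraph (Fin n)).deleteEdges {e}) = n - 2 := by
  rw [dem_top_deleteEdges (not_isDiag_of_mem_edgeSet _ he), Nat.card_fin]

theorem stmt17 (n : ℕ) (hn : 3 ≤ n) (e : Sym2 (Fin n))
    (he : e ∈ (⊤ : SimpleGraph (Fin n)).edgeSet) :
    dem ((⊤ : SimpleGraph (Fin n)).deleteEdges {e}) = n - 2 :=
  stmt17_general n e he
end
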